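/- Let F₁(z₁,z₂) = (z₁φ(p), z₂/φ(p)) with p = z₁z₂ and φ(0) ≠ 0 (so P(F₁) = id), and let F₂(z₁,z₂) = (z₁φ₂(p), z₂ψ₂(p)) with ρ₂(t) = tφ₂(t)ψ₂(t). If F₁ and F₂ commute, then either φ is constant (F₁ is linear diagonal) or ρ₂ has finite compositional order. -/

import Mathlib

noncomputable section

def compP (f g : PowerSeries ℂ) : PowerSeries ℂ :=
  PowerSeries.mk fun n =>
    ∑ j ∈ Finset.range (n + 1), PowerSeries.coeff j f * PowerSeries.coeff n (g ^ j)

def iterP (g : PowerSeries ℂ) : ℕ → PowerSeries ℂ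
  | 0 => PowerSeries.X
  | m + 1 => compP g (iterP g m)

abbrev FormalMap (n : ℕ) := Fin n → MvPowerSeries (Fin n) ℂ

def degreeOf {n : ℕ} (d : Fin n →₀ ℕ) : ℕ := d.sum fun _ m => m

def substM {n : ℕ} (G : FormalMap n) (f : MvPowerSeries (Fin n) ℂ) :
    MvPowerSeries (Fin n) ℂ :=
  fun d =>
    ∑ e ∈ Finset.Iic (Finsupp.equivFunOnFinite.symm fun _ => degreeOf d),
      MvPowerSeries.coeff e f * MvPowerSeries.coeff d (∏ i, G i ^ e i)

def compM {n : ℕ} (F G : FormalMap n) : FormalMap n := fun i => substM G (F i)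

def idM (n : ℕ) : FormalMap n := fun i => MvPowerSeries.X i

def iterM {n : ℕ} (F : FormalMap n) : ℕ → FormalMap n
  | 0 => idM n
  | m + 1 => compM F (iterM F m)

def linMatrix {n : ℕ} (F : FormalMap n) : Matrix (Fin n) (Fin n) ℂ :=
  fun i j => MvPowerSeries.coeff (Finsupp.single j 1) (F i)

def linMap {n : ℕ} (F : FormalMap n) : FormalMap n :=
  fun i => ∑ j, MvPowerSeries.C (σ := Fin n) (R := ℂ) (linMatrix F i j) * MvPowerSeries.X j

def substPM (q : MvPowerSeries (Fin 2) ℂ) (φ : PowerSeries ℂ) : MvPowerSeries (Fin 2) ℂ :=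
  fun d =>
    ∑ j ∈ Finset.range (degreeOf d + 1),
      PowerSeries.coeff j φ * MvPowerSeries.coeff d (q ^ j)

def pXY : MvPowerSeries (Fin 2) ℂ := MvPowerSeries.X 0 * MvPowerSeries.X 1

def Mmap (φ ψ : PowerSeries ℂ) : FormalMap 2 :=
  ![MvPowerSeries.X 0 * substPM pXY φ, MvPowerSeries.X 1 * substPM pXY ψ]

/-!
Comparing first components, F₁ ∘ F₂ = F₂ ∘ F₁ says z₁ φ₂(p) φ(ρ₂(p)) = z₁ φ(p) φ₂(p), i.e.
φ ∘ ρ₂ = φ. Suppose φ is not constant and let k ≥ 1 be the order of φ - φ(0). The coefficient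
of t^k in φ ∘ ρ₂ = φ gives ρ₂'(0)^k = 1, so g = ρ₂^{∘k} is tangent to the identity and still
fixes φ. If g ≠ t, write g = t(1 + b t^l + …) with b ≠ 0 and l ≥ 1: then the coefficient of
t^(k+l) in φ ∘ g - φ is k a_k b ≠ 0, a contradiction. Hence ρ₂^{∘k} = t.
-/

namespace MvPowerSeries

variable {σ τ R : Type*} [CommRing R]

theorem coeff_prod_pow_eq_zero_of_degree_lt [Fintype σ] {G : σ → MvPowerSeries τ R}
    (hG : ∀ s, constantCoeff (G s) = 0) {d : τ →₀ ℕ} {e : σ →₀ ℕ} {i : σ}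
    (h : d.degree < e i) : coeff d (∏ s, G s ^ e s) = 0 := by
  apply coeff_of_lt_order
  calc (d.degree : ℕ∞) < e i := by exact_mod_cast h
    _ ≤ ∑ s, (e s : ℕ∞) :=
      Finset.single_le_sum (f := fun s => (e s : ℕ∞)) (fun _ _ => zero_le) (Finset.mem_univ i)
    _ ≤ ∑ s, (G s ^ e s).order :=
      Finset.sum_le_sum fun s _ => le_order_pow_of_constantCoeff_eq_zero _ (hG s)
    _ ≤ (∏ s, G s ^ e s).order := le_order_prod _ _

theorem coeff_subst_eq_sum_Iic [Fintype σ] [DecidableEq σ] {G : σ → MvPowerSeries τ R}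
    (hG : ∀ s, constantCoeff (G s) = 0) (f : MvPowerSeries σ R) (d : τ →₀ ℕ) :
    coeff d (subst G f) =
      ∑ e ∈ Finset.Iic (Finsupp.equivFunOnFinite.symm fun _ : σ => d.degree),
        coeff e f * coeff d (∏ s, G s ^ e s) := by
  simp only [coeff_subst (hasSubst_of_constantCoeff_zero hG), Finsupp.prod_pow, smul_eq_mul]
  apply finsum_eq_sum_of_support_subset
  intro e he
  refine Finset.mem_coe.mpr (Finset.mem_Iic.mpr (Finsupp.le_def.mpr fun i => ?_))
  by_contra! h
  rw [Finsupp.coe_equivFunOnFinite_symm] at h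
  refine he ?_
  show coeff e f * _ = 0
  rw [coeff_prod_pow_eq_zero_of_degree_lt hG h, mul_zero]

end MvPowerSeries

namespace PowerSeries

variable {R : Type*} [CommRing R]

theorem coeff_pow_eq_zero_of_lt {g : R⟦X⟧} (hg : constantCoeff g = 0) {n j : ℕ} (h : n < j) :
    coeff n (g ^ j) = 0 :=
  coeff_of_lt_order n ((Nat.cast_lt.mpr h).trans_le (le_order_pow_of_constantCoeff_eq_zero j hg))

theorem order_toNat_pos_of_constantCoeff_eq_zero {φ : R⟦X⟧} (hφ : φ ≠ 0)
    (hφ0 : constantCoeff φ = 0) : 0 < φ.order.toNat :=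
  Nat.pos_of_ne_zero fun h => coeff_order hφ (by rw [h, coeff_zero_eq_constantCoeff_apply, hφ0])

theorem coeff_subst_eq_sum_range {g : R⟦X⟧} (hg : constantCoeff g = 0) (f : R⟦X⟧) (n : ℕ) :
    coeff n (f.subst g) = ∑ j ∈ Finset.range (n + 1), coeff j f * coeff n (g ^ j) := by
  rw [coeff_subst' (HasSubst.of_constantCoeff_zero' hg)]
  refine finsum_eq_sum_of_support_subset _ fun j hj => ?_
  rw [Finset.mem_coe, Finset.mem_range, Nat.lt_succ_iff]
  by_contra! h
  exact hj (by simp only [smul_eq_mul, coeff_pow_eq_zero_of_lt hg h, mul_zero])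

theorem coeff_subst_eq_sum_range_degree {τ : Type*} {q : MvPowerSeries τ R}
    (hq : MvPowerSeries.constantCoeff q = 0) (f : R⟦X⟧) (d : τ →₀ ℕ) :
    MvPowerSeries.coeff d (f.subst q) =
      ∑ j ∈ Finset.range (d.degree + 1), coeff j f * MvPowerSeries.coeff d (q ^ j) := by
  rw [coeff_subst (HasSubst.of_constantCoeff_zero hq)]
  refine finsum_eq_sum_of_support_subset _ fun j hj => ?_
  rw [Finset.mem_coe, Finset.mem_range, Nat.lt_succ_iff]
  by_contra! h
  refine hj ?_
  simp only [smul_eq_mul]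
  rw [MvPowerSeries.coeff_of_lt_order ((Nat.cast_lt.mpr h).trans_le
    (MvPowerSeries.le_order_pow_of_constantCoeff_eq_zero j hq)), mul_zero]

theorem subst_X_mul_X_injective {σ : Type*} {i j : σ} (hij : i ≠ j) :
    Function.Injective fun f : R⟦X⟧ =>
      f.subst (MvPowerSeries.X i * MvPowerSeries.X j : MvPowerSeries σ R) := by
  classical
  have hpow : ∀ k, (MvPowerSeries.X i * MvPowerSeries.X j : MvPowerSeries σ R) ^ k =
      MvPowerSeries.monomial (Finsupp.single i k + Finsupp.single j k) 1 := fun k => by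
    rw [mul_pow, MvPowerSeries.X_pow_eq, MvPowerSeries.X_pow_eq,
      MvPowerSeries.monomial_mul_monomial, one_mul]
  have key : ∀ (f : R⟦X⟧) (n : ℕ), MvPowerSeries.coeff (Finsupp.single i n + Finsupp.single j n)
      (f.subst (MvPowerSeries.X i * MvPowerSeries.X j : MvPowerSeries σ R)) = coeff n f := by
    intro f n
    rw [coeff_subst_eq_sum_range_degree (by simp), Finset.sum_eq_single_of_mem n (by simp), hpow,
      MvPowerSeries.coeff_monomial_same, mul_one]
    intro k _ hkn
    rw [hpow, MvPowerSeries.coeff_monomial, if_neg, mul_zero]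
    intro h
    have := DFunLike.congr_fun h i
    simp [hij.symm] at this
    exact hkn this.symm
  intro f g hfg
  ext n
  rw [← key f n, ← key g n]
  exact congrArg _ hfg

theorem coeff_pow_self {g : R⟦X⟧} (hg : constantCoeff g = 0) (j : ℕ) :
    coeff j (g ^ j) = coeff 1 g ^ j := by
  obtain ⟨r, rfl⟩ := X_dvd_iff.mpr hg
  rw [mul_pow, coeff_X_pow_mul', if_pos le_rfl, Nat.sub_self, coeff_zero_eq_constantCoeff_apply,
    map_pow, ← coeff_zero_eq_constantCoeff_apply, ← coeff_succ_X_mul]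

theorem coeff_one_subst {g : R⟦X⟧} (hg : constantCoeff g = 0) (f : R⟦X⟧) :
    coeff 1 (f.subst g) = coeff 1 f * coeff 1 g := by
  simp [coeff_subst_eq_sum_range hg, Finset.sum_range_succ]

theorem constantCoeff_subst_of_constantCoeff_eq_zero {g : R⟦X⟧} (hg : constantCoeff g = 0)
    (f : R⟦X⟧) : constantCoeff (f.subst g) = constantCoeff f := by
  rw [← coeff_zero_eq_constantCoeff_apply, coeff_subst_eq_sum_range hg]
  simp

theorem coeff_one_add_X_pow_mul_pow {l i : ℕ} (hi : i < 2 * l) (v : R⟦X⟧) (j : ℕ) :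
    coeff i ((1 + X ^ l * v) ^ j) = coeff i 1 + (j : R) * coeff i (X ^ l * v) := by
  obtain ⟨w, hw⟩ := sq_dvd_add_pow_sub_sub (X ^ l * v) 1 j
  rw [one_pow, one_pow, one_mul, sub_sub, sub_eq_iff_eq_add] at hw
  rw [hw, map_add, mul_pow, ← pow_mul, mul_assoc, coeff_X_pow_mul', if_neg (by omega), zero_add,
    map_add, ← map_natCast (C (R := R)), coeff_mul_C, mul_comm, add_comm]

theorem coeff_X_mul_one_add_X_pow_mul_pow {l n j : ℕ} (hj : j ≤ n) (hn : n < j + 2 * l)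
    (v : R⟦X⟧) :
    coeff n ((X * (1 + X ^ l * v)) ^ j) =
      coeff (n - j) 1 + (j : R) * coeff (n - j) (X ^ l * v) := by
  rw [mul_pow, coeff_X_pow_mul', if_pos hj, coeff_one_add_X_pow_mul_pow (by omega)]

theorem constantCoeff_eq_zero_of_subst_X_mul_one_add_X_pow_mul_eq [IsDomain R] [CharZero R]
    {φ v : R⟦X⟧} {l : ℕ} (hl : 0 < l) (hφ : φ ≠ 0) (hφ0 : constantCoeff φ = 0)
    (hfix : φ.subst (X * (1 + X ^ l * v)) = φ) : constantCoeff v = 0 := by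
  have hk := order_toNat_pos_of_constantCoeff_eq_zero hφ hφ0
  set k := φ.order.toNat
  set N := k + l
  have hterm : ∀ j, k ≤ j → j ≤ N →
      coeff N ((X * (1 + X ^ l * v)) ^ j) = coeff (N - j) 1 + (j : R) * coeff (N - j) (X ^ l * v) :=
    fun j hkj hjN => coeff_X_mul_one_add_X_pow_mul_pow hjN (by omega) v
  -- Of the coefficient of `X ^ N`, only the terms `j = k` (giving `k * coeff k φ * constantCoeff v`)
  -- and `j = N` survive.
  have hsum := congrArg (coeff N) hfix
  rw [coeff_subst_eq_sum_range (by simp), Finset.sum_eq_add_of_mem k N (by simp; omega)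
    (by simp) (by omega)] at hsum
  · rw [hterm k le_rfl (by omega), hterm N (by omega) le_rfl, show N - k = l by omega,
      Nat.sub_self] at hsum
    have hl0 : coeff 0 (X ^ l * v) = 0 := by rw [coeff_X_pow_mul', if_neg (by omega)]
    have hll : coeff l (X ^ l * v) = constantCoeff v := by
      rw [coeff_X_pow_mul', if_pos le_rfl, Nat.sub_self, coeff_zero_eq_constantCoeff_apply]
    rw [coeff_one, if_neg hl.ne', coeff_one, if_pos rfl, hl0, hll] at hsum
    have hprod : coeff k φ * ((k : R) * constantCoeff v) = 0 := by linear_combination hsum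
    exact (mul_eq_zero.mp ((mul_eq_zero.mp hprod).resolve_left (coeff_order hφ))).resolve_left
      (Nat.cast_ne_zero.mpr hk.ne')
  · intro j hj hne
    rw [Finset.mem_range] at hj
    rcases lt_or_ge j k with hjk | hkj
    · rw [coeff_of_lt_order_toNat j hjk, zero_mul]
    · rw [hterm j hkj (by omega), coeff_one, if_neg (by omega), coeff_X_pow_mul', if_neg (by omega),
        mul_zero, add_zero, mul_zero]

theorem eq_X_of_subst_eq [IsDomain R] [CharZero R] {φ g : R⟦X⟧} (hφ : φ ≠ 0)
    (hφ0 : constantCoeff φ = 0) (hg0 : constantCoeff g = 0) (hg1 : coeff 1 g = 1)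
    (hfix : φ.subst g = φ) : g = X := by
  by_contra hgX
  set u := g - X
  have hu : u ≠ 0 := sub_ne_zero.mpr hgX
  set m := u.order.toNat
  have hm : 2 ≤ m := by
    have hum : coeff m u ≠ 0 := coeff_order hu
    by_contra! h
    interval_cases m
    · exact hum (by simp [u, hg0])
    · exact hum (by simp [u, hg1])
  have hg : g = X * (1 + X ^ (m - 1) * u.divXPowOrder) := by
    have := X_pow_order_mul_divXPowOrder (f := u)
    rw [mul_add, mul_one, ← mul_assoc, ← pow_succ', Nat.sub_add_cancel (by omega), this]
    ring
  exact constantCoeff_divXPowOrder_eq_zero_iff.not.mpr hu <|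
    constantCoeff_eq_zero_of_subst_X_mul_one_add_X_pow_mul_eq (by omega) hφ hφ0 (hg ▸ hfix)

section Iterate

variable {ρ : R⟦X⟧}

theorem constantCoeff_iterate_subst (hρ : constantCoeff ρ = 0) (n : ℕ) :
    constantCoeff ((fun g : R⟦X⟧ => ρ.subst g)^[n] X) = 0 := by
  induction n with
  | zero => simp
  | succ n ih =>
    rw [Function.iterate_succ_apply', constantCoeff_subst_of_constantCoeff_eq_zero ih, hρ]

theorem coeff_one_iterate_subst (hρ : constantCoeff ρ = 0) (n : ℕ) :
    coeff 1 ((fun g : R⟦X⟧ => ρ.subst g)^[n] X) = coeff 1 ρ ^ n := by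
  induction n with
  | zero => simp
  | succ n ih =>
    rw [Function.iterate_succ_apply', coeff_one_subst (constantCoeff_iterate_subst hρ n), ih,
      pow_succ']

theorem subst_iterate_subst {φ : R⟦X⟧} (hρ : constantCoeff ρ = 0) (hfix : φ.subst ρ = φ)
    (n : ℕ) : φ.subst ((fun g : R⟦X⟧ => ρ.subst g)^[n] X) = φ := by
  induction n with
  | zero => exact X_subst φ
  | succ n ih =>
    rw [Function.iterate_succ_apply', ← subst_comp_subst_apply (HasSubst.of_constantCoeff_zero' hρ)
      (HasSubst.of_constantCoeff_zero' (constantCoeff_iterate_subst hρ n)), hfix, ih]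

end Iterate

theorem coeff_one_pow_order_eq_one_of_subst_eq [IsDomain R] {φ ρ : R⟦X⟧} (hφ : φ ≠ 0)
    (hρ : constantCoeff ρ = 0) (hfix : φ.subst ρ = φ) :
    coeff 1 ρ ^ φ.order.toNat = 1 := by
  set k := φ.order.toNat
  have hk := congrArg (coeff k) hfix
  rw [coeff_subst_eq_sum_range hρ, Finset.sum_eq_single_of_mem k (by simp), coeff_pow_self hρ]
    at hk
  · exact mul_left_cancel₀ (coeff_order hφ) (hk.trans (mul_one _).symm)
  · intro j hj hjk
    have : j < k := by simp at hj; omega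
    rw [coeff_of_lt_order_toNat j this, zero_mul]

theorem exists_iterate_subst_eq_X [IsDomain R] [CharZero R] {φ ρ : R⟦X⟧}
    (hφ : ∀ c, φ ≠ C c) (hρ : constantCoeff ρ = 0) (hfix : φ.subst ρ = φ) :
    ∃ m, 0 < m ∧ (fun g : R⟦X⟧ => ρ.subst g)^[m] X = X := by
  set ψ := φ - C (constantCoeff φ)
  have hψ : ψ ≠ 0 := sub_ne_zero.mpr (hφ _)
  have hψ0 : constantCoeff ψ = 0 := by simp [ψ]
  have hψfix : ψ.subst ρ = ψ := by
    rw [subst_sub (HasSubst.of_constantCoeff_zero' hρ), hfix, subst_C]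
    rfl
  refine ⟨ψ.order.toNat, order_toNat_pos_of_constantCoeff_eq_zero hψ hψ0,
    eq_X_of_subst_eq hψ hψ0 (constantCoeff_iterate_subst hρ _) ?_ (subst_iterate_subst hρ hψfix _)⟩
  rw [coeff_one_iterate_subst hρ, coeff_one_pow_order_eq_one_of_subst_eq hψ hρ hψfix]

end PowerSeries

theorem compP_eq_subst {g : PowerSeries ℂ} (hg : PowerSeries.constantCoeff g = 0)
    (f : PowerSeries ℂ) : compP f g = f.subst g := by
  ext n
  rw [PowerSeries.coeff_subst_eq_sum_range hg, compP, PowerSeries.coeff_mk]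

theorem iterP_eq_iterate_subst {ρ : PowerSeries ℂ} (hρ : PowerSeries.constantCoeff ρ = 0)
    (n : ℕ) : iterP ρ n = (fun g : PowerSeries ℂ => ρ.subst g)^[n] PowerSeries.X := by
  induction n with
  | zero => rfl
  | succ n ih =>
    rw [iterP, Function.iterate_succ_apply', ← ih,
      compP_eq_subst (ih ▸ PowerSeries.constantCoeff_iterate_subst hρ n)]

theorem substM_eq_subst {n : ℕ} {G : FormalMap n}
    (hG : ∀ i, MvPowerSeries.constantCoeff (G i) = 0) (f : MvPowerSeries (Fin n) ℂ) :
    substM G f = MvPowerSeries.subst G f := by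
  ext d
  exact (MvPowerSeries.coeff_subst_eq_sum_Iic hG f d).symm

theorem substPM_eq_subst {q : MvPowerSeries (Fin 2) ℂ} (hq : MvPowerSeries.constantCoeff q = 0)
    (φ : PowerSeries ℂ) : substPM q φ = φ.subst q := by
  ext d
  exact (PowerSeries.coeff_subst_eq_sum_range_degree hq φ d).symm

theorem constantCoeff_pXY : MvPowerSeries.constantCoeff pXY = 0 := by
  simp [pXY]

theorem Mmap_eq (φ ψ : PowerSeries ℂ) :
    Mmap φ ψ = ![MvPowerSeries.X 0 * φ.subst pXY, MvPowerSeries.X 1 * ψ.subst pXY] := by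
  rw [Mmap, substPM_eq_subst constantCoeff_pXY, substPM_eq_subst constantCoeff_pXY]

theorem constantCoeff_Mmap (φ ψ : PowerSeries ℂ) (i : Fin 2) :
    MvPowerSeries.constantCoeff (Mmap φ ψ i) = 0 := by
  fin_cases i <;> simp [Mmap_eq]

theorem compM_Mmap_zero (α β γ δ : PowerSeries ℂ) :
    compM (Mmap α β) (Mmap γ δ) 0 =
      MvPowerSeries.X 0 * (γ * α.subst (PowerSeries.X * γ * δ)).subst pXY := by
  have hG := MvPowerSeries.hasSubst_of_constantCoeff_zero (constantCoeff_Mmap γ δ)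
  have hp := PowerSeries.HasSubst.of_constantCoeff_zero constantCoeff_pXY
  have hρ : PowerSeries.HasSubst (PowerSeries.X * γ * δ : PowerSeries ℂ) :=
    PowerSeries.HasSubst.of_constantCoeff_zero' (by simp)
  have hpG : MvPowerSeries.subst (Mmap γ δ) pXY = (PowerSeries.X * γ * δ).subst pXY := by
    have hG01 : MvPowerSeries.subst (Mmap γ δ) pXY = Mmap γ δ 0 * Mmap γ δ 1 := by
      rw [pXY, MvPowerSeries.subst_mul hG, MvPowerSeries.subst_X hG, MvPowerSeries.subst_X hG]
    rw [hG01, PowerSeries.subst_mul hp, PowerSeries.subst_mul hp, PowerSeries.subst_X hp, Mmap_eq]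
    simp only [Matrix.cons_val_zero, Matrix.cons_val_one]
    rw [pXY]
    ring
  have hαG : MvPowerSeries.subst (Mmap γ δ) (α.subst pXY) =
      PowerSeries.subst pXY (α.subst (PowerSeries.X * γ * δ)) := by
    rw [PowerSeries.subst_def, MvPowerSeries.subst_comp_subst_apply hp.const hG,
      ← PowerSeries.subst_def, hpG, PowerSeries.subst_comp_subst_apply hρ hp]
  rw [compM, substM_eq_subst (constantCoeff_Mmap γ δ), Mmap_eq α β]
  simp only [Matrix.cons_val_zero]
  rw [MvPowerSeries.subst_mul hG, MvPowerSeries.subst_X hG, hαG, Mmap_eq,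
    PowerSeries.subst_mul hp]
  simp only [Matrix.cons_val_zero]
  ring

theorem const_or_finite_order_of_commuting_general (φ φ₂ ψ₂ : PowerSeries ℂ)
    (hφ : PowerSeries.constantCoeff φ ≠ 0)
    (hφ₂ : PowerSeries.constantCoeff φ₂ ≠ 0)
    (hcomm : compM (Mmap φ φ⁻¹) (Mmap φ₂ ψ₂) = compM (Mmap φ₂ ψ₂) (Mmap φ φ⁻¹)) :
    (∃ c : ℂ, φ = PowerSeries.C c) ∨
      ∃ m : ℕ, 0 < m ∧ iterP (PowerSeries.X * φ₂ * ψ₂) m = PowerSeries.X := by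
  rw [or_iff_not_imp_left, not_exists]
  intro hconst
  have hρ : PowerSeries.constantCoeff (PowerSeries.X * φ₂ * ψ₂) = 0 := by simp
  have h0 := congrFun hcomm 0
  rw [compM_Mmap_zero, compM_Mmap_zero, mul_assoc PowerSeries.X φ, PowerSeries.mul_inv_cancel φ hφ,
    mul_one, PowerSeries.X_subst] at h0
  have hfix : φ.subst (PowerSeries.X * φ₂ * ψ₂) = φ := by
    have h := PowerSeries.subst_X_mul_X_injective (R := ℂ) (show (0 : Fin 2) ≠ 1 by decide)
      (mul_left_cancel₀ (nonZeroDivisors.ne_zero MvPowerSeries.X_mem_nonzeroDivisors) h0)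
    exact mul_left_cancel₀ (fun h => hφ₂ (by simp [h])) (h.trans (mul_comm _ _))
  obtain ⟨m, hm, hρm⟩ := PowerSeries.exists_iterate_subst_eq_X hconst hρ hfix
  exact ⟨m, hm, by rw [iterP_eq_iterate_subst hρ, hρm]⟩

/-- If F₁ = (z₁φ(p), z₂/φ(p)) (so P(F₁) = id) commutes with F₂ = (z₁φ₂(p), z₂ψ₂(p)),
then either φ is constant (F₁ is linear diagonal) or ρ₂(t) = tφ₂(t)ψ₂(t) has finite
compositional order. -/
theorem const_or_finite_order_of_commuting (φ φ₂ ψ₂ : PowerSeries ℂ)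
    (hφ : PowerSeries.constantCoeff φ ≠ 0)
    (hφ₂ : PowerSeries.constantCoeff φ₂ ≠ 0) (hψ₂ : PowerSeries.constantCoeff ψ₂ ≠ 0)
    (hcomm : compM (Mmap φ φ⁻¹) (Mmap φ₂ ψ₂) = compM (Mmap φ₂ ψ₂) (Mmap φ φ⁻¹)) :
    (∃ c : ℂ, φ = PowerSeries.C c) ∨
      ∃ m : ℕ, 0 < m ∧ iterP (PowerSeries.X * φ₂ * ψ₂) m = PowerSeries.X :=
  const_or_finite_order_of_commuting_general φ φ₂ ψ₂ hφ hφ₂ hcomm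

end
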